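/- Let μ be a locally flat-foldable MV-assignment of the m×n Miura-ori (m, n ≥ 2). Define c on the cells by c(v_1) = 0 and c(v_k) = c(v_{k−1}) + μ(c_k) (mod 3) for 2 ≤ k ≤ mn, where v_1, …, v_{mn} is the boustrophedon order and c_k is the crease separating cells v_{k−1} and v_k. Then c is a proper 3-coloring of the grid graph G(m,n): for every pair of adjacent cells (horizontally or vertically adjacent), the values of c differ; and c(0,0) = 0. -/
import Mathlib


namespace Miura

/-- The column of the cell with (0-based) boustrophedon index `k` in a grid with `n`
columns: row `k / n` is traversed left-to-right when it is even, right-to-left when odd. -/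
def bCol (n k : ℕ) : ℕ := if (k / n) % 2 = 0 then k % n else n - 1 - k % n

/-- The (0-based) boustrophedon index of the cell in row `i` and column `j`
of a grid with `n` columns. -/
def bIdx (n i j : ℕ) : ℕ := i * n + (if i % 2 = 0 then j else n - 1 - j)

/-- The creases of the `m × n` Miura-ori, dual to the edges of the `m × n` grid graph:
`vert i j` is the crease V(i,j) separating the horizontally adjacent cells `(i, j)` and
`(i, j+1)`, and `horiz i j` is the crease H(i,j) separating the vertically adjacent cells
`(i, j)` (upper) and `(i+1, j)` (lower). -/
inductive Crease (m n : ℕ) : Type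
  | vert  (i j : ℕ) (hi : i < m) (hj : j + 1 < n) : Crease m n
  | horiz (i j : ℕ) (hi : i + 1 < m) (hj : j < n) : Crease m n

/-- A mountain-valley assignment: every crease gets the value `1` (mountain)
or `-1` (valley). -/
def IsMV {m n : ℕ} (μ : Crease m n → ℤ) : Prop := ∀ e : Crease m n, μ e = 1 ∨ μ e = -1

/-- `μ` is a locally flat-foldable MV-assignment of the `m × n` Miura-ori (with the top
row of crease-pattern vertices "pointing left"): it is an MV-assignment, and at each
interior vertex `w(i,j)`, incident to the creases V(i,j), V(i+1,j), H(i,j), H(i,j+1),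
the sum `s` of the four MV-values is `2` or `-2` (Maekawa), and the distinguished crease
`e4` (namely H(i,j) for `i` even, H(i,j+1) for `i` odd) satisfies `μ e4 = s / 2`,
i.e. `2 * μ e4 = s`. -/
def FlatFoldable {m n : ℕ} (μ : Crease m n → ℤ) : Prop :=
  IsMV μ ∧ ∀ i j : ℕ, ∀ hi : i + 1 < m, ∀ hj : j + 1 < n,
    ((μ (.vert i j (by omega) hj) + μ (.vert (i+1) j hi hj)
        + μ (.horiz i j hi (by omega)) + μ (.horiz i (j+1) hi hj) = 2 ∨
      μ (.vert i j (by omega) hj) + μ (.vert (i+1) j hi hj)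
        + μ (.horiz i j hi (by omega)) + μ (.horiz i (j+1) hi hj) = -2) ∧
     2 * μ (if i % 2 = 0 then Crease.horiz i j hi (by omega) else Crease.horiz i (j+1) hi hj)
       = μ (.vert i j (by omega) hj) + μ (.vert (i+1) j hi hj)
          + μ (.horiz i j hi (by omega)) + μ (.horiz i (j+1) hi hj))

lemma bCol_lt {n : ℕ} (k : ℕ) (hn : 0 < n) : bCol n k < n := by
  unfold bCol
  split
  · exact Nat.mod_lt _ hn
  · omega

lemma rowEnd_lt {m n k : ℕ} (hn : 0 < n) (hk : k + 1 < m * n) (h : (k + 1) % n = 0) :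
    k / n + 1 < m := by
  obtain ⟨q, hq⟩ := Nat.dvd_of_mod_eq_zero h
  have hqm : q < m := by
    have h1 : n * q < n * m := by rw [← hq, Nat.mul_comm n m]; exact hk
    exact Nat.lt_of_mul_lt_mul_left h1
  have h2 : n * (q + 1) ≤ n * m := Nat.mul_le_mul_left n hqm
  rw [Nat.mul_succ] at h2
  rw [← Nat.add_div_right k hn]
  rw [Nat.div_lt_iff_lt_mul hn]
  have h3 : n * q = k + 1 := hq.symm
  nlinarith
lemma mod_succ_lt {n k : ℕ} (hn : 2 ≤ n) (h : (k + 1) % n ≠ 0) : k % n + 1 < n := by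
  have h1 : k % n < n := Nat.mod_lt _ (by omega)
  by_contra h2
  apply h
  have h3 : k % n + 1 = n := by omega
  have h4 : (k + 1) % n = (k % n + 1 % n) % n := Nat.add_mod k 1 n
  have h5 : 1 % n = 1 := Nat.mod_eq_of_lt (by omega)
  rw [h5, h3, Nat.mod_self] at h4
  exact h4

/-- The MV-value of the crease `c_{k+1}` separating the cells `v_k` and `v_{k+1}`
(0-based) of the boustrophedon order, and `0` for an out-of-range index. -/
def stepVal (m n : ℕ) (μ : Crease m n → ℤ) (k : ℕ) : ℤ :=
  if h : 2 ≤ n ∧ k + 1 < m * n then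
    if hr : (k + 1) % n = 0 then
      μ (Crease.horiz (k / n) (bCol n k) (rowEnd_lt (by omega) h.2 hr) (bCol_lt k (by omega)))
    else if (k / n) % 2 = 0 then
      μ (Crease.vert (k / n) (k % n)
          ((Nat.div_lt_iff_lt_mul (by omega)).mpr (by omega))
          (mod_succ_lt h.1 hr))
    else
      μ (Crease.vert (k / n) (n - 2 - k % n)
          ((Nat.div_lt_iff_lt_mul (by omega)).mpr (by omega))
          (by omega))
  else 0

/-- The coloring of the boustrophedon path determined by a MV-assignment `μ`:
`c(v_1) = 0` and `c(v_k) = c(v_{k-1}) + μ(c_k) (mod 3)`, in 0-based indexing. -/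
def pathColor (m n : ℕ) (μ : Crease m n → ℤ) : ℕ → ZMod 3
  | 0 => 0
  | k + 1 => pathColor m n μ k + ((stepVal m n μ k : ℤ) : ZMod 3)

/-- The coloring of the cell in row `i`, column `j` determined by the MV-assignment `μ`
via the boustrophedon recursion. -/
def cellColor (m n : ℕ) (μ : Crease m n → ℤ) (i j : ℕ) : ZMod 3 :=
  pathColor m n μ (bIdx n i j)

/-- `c` is a proper 3-coloring of the cells of the `m × n` grid graph (cells indexed
by `ℕ × ℕ`, in range): cells at distance `|i - i'| + |j - j'| = 1` get different colors. -/
def ProperColoringN (m n : ℕ) (c : ℕ → ℕ → ZMod 3) : Prop :=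
  ∀ i j i' j' : ℕ, i < m → j < n → i' < m → j' < n →
    (i - i') + (i' - i) + (j - j') + (j' - j) = 1 → c i j ≠ c i' j'

/-- `c` is a proper 3-coloring of the `m × n` grid graph on vertex set
`Fin m × Fin n`: vertices at distance `|i - i'| + |j - j'| = 1` get different colors. -/
def ProperColoring (m n : ℕ) (c : Fin m × Fin n → ZMod 3) : Prop :=
  ∀ p q : Fin m × Fin n,
    ((p.1 : ℕ) - (q.1 : ℕ)) + ((q.1 : ℕ) - (p.1 : ℕ))
      + ((p.2 : ℕ) - (q.2 : ℕ)) + ((q.2 : ℕ) - (p.2 : ℕ)) = 1 → c p ≠ c q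

/-- `1` if `d = 1`, and `-1` otherwise (so `-1` when `d = 2`); encodes the rule
"`μ = 1` if the color difference is `1 (mod 3)`, `μ = -1` if it is `2 (mod 3)`". -/
def sgn3 (d : ZMod 3) : ℤ := if d = 1 then 1 else -1

/-- The MV-assignment determined by a coloring `c` of the cells: a path crease gets
value `1` resp. `-1` according as the color difference `c(v_k) - c(v_{k-1})` along the
boustrophedon path is `1` resp. `2 (mod 3)`; a non-path crease H(i,j) gets value `1`
resp. `-1` according as `c(i,j) - c(i+1,j)` is `1` resp. `2 (mod 3)`.  (Every vertical
crease V(i,j) lies on the path: in an even row the path crosses it from `(i,j)` to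
`(i,j+1)`, in an odd row from `(i,j+1)` to `(i,j)`.  The crease H(i,j) lies on the path
exactly when `j` is the last column visited in row `i`, i.e. `j = n - 1` for `i` even
and `j = 0` for `i` odd, in which case the path crosses it from `(i,j)` to `(i+1,j)`.) -/
def muOf (m n : ℕ) (c : ℕ → ℕ → ZMod 3) : Crease m n → ℤ
  | .vert i j _ _ =>
      if i % 2 = 0 then sgn3 (c i (j+1) - c i j) else sgn3 (c i j - c i (j+1))
  | .horiz i j _ _ =>
      if j = (if i % 2 = 0 then n - 1 else 0) then sgn3 (c (i+1) j - c i j)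
      else sgn3 (c i j - c (i+1) j)


/-- Proof-irrelevant value of a vertical crease. -/
def vertVal (m n : ℕ) (μ : Crease m n → ℤ) (i j : ℕ) : ℤ :=
  if h : i < m ∧ j + 1 < n then μ (.vert i j h.1 h.2) else 0

/-- Proof-irrelevant value of a horizontal crease. -/
def horizVal (m n : ℕ) (μ : Crease m n → ℤ) (i j : ℕ) : ℤ :=
  if h : i + 1 < m ∧ j < n then μ (.horiz i j h.1 h.2) else 0

lemma mu_vert {m n : ℕ} (μ : Crease m n → ℤ) {i j : ℕ} (h1 : i < m) (h2 : j + 1 < n) :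
    μ (Crease.vert i j h1 h2) = vertVal m n μ i j := by
  unfold vertVal; rw [dif_pos ⟨h1, h2⟩]

lemma mu_horiz {m n : ℕ} (μ : Crease m n → ℤ) {i j : ℕ} (h1 : i + 1 < m) (h2 : j < n) :
    μ (Crease.horiz i j h1 h2) = horizVal m n μ i j := by
  unfold horizVal; rw [dif_pos ⟨h1, h2⟩]

lemma vertVal_pm {m n : ℕ} {μ : Crease m n → ℤ} (hμ : IsMV μ) {i j : ℕ}
    (h1 : i < m) (h2 : j + 1 < n) : vertVal m n μ i j = 1 ∨ vertVal m n μ i j = -1 := by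
  rw [← mu_vert μ h1 h2]; exact hμ _

lemma horizVal_pm {m n : ℕ} {μ : Crease m n → ℤ} (hμ : IsMV μ) {i j : ℕ}
    (h1 : i + 1 < m) (h2 : j < n) : horizVal m n μ i j = 1 ∨ horizVal m n μ i j = -1 := by
  rw [← mu_horiz μ h1 h2]; exact hμ _

lemma pathColor_succ (m n : ℕ) (μ : Crease m n → ℤ) (k : ℕ) :
    pathColor m n μ (k + 1) = pathColor m n μ k + ((stepVal m n μ k : ℤ) : ZMod 3) := rfl

lemma S1 {m n : ℕ} (μ : Crease m n → ℤ) (hn : 2 ≤ n) {i j : ℕ}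
    (he : i % 2 = 0) (hi : i < m) (hj : j + 1 < n) :
    cellColor m n μ i (j+1) = cellColor m n μ i j + ((vertVal m n μ i j : ℤ) : ZMod 3) := by
  have hn0 : 0 < n := by omega
  have hdiv : (i * n + j) / n = i := by
    rw [Nat.mul_comm, Nat.mul_add_div hn0, Nat.div_eq_of_lt (by omega)]; omega
  have hmod : (i * n + j) % n = j := by
    rw [Nat.mul_comm, Nat.mul_add_mod, Nat.mod_eq_of_lt (by omega)]
  have hmod1 : (i * n + j + 1) % n = j + 1 := by
    have h : i * n + j + 1 = n * i + (j + 1) := by ring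
    rw [h, Nat.mul_add_mod, Nat.mod_eq_of_lt hj]
  have hk : i * n + j + 1 < m * n := by
    have h1 : (i + 1) * n ≤ m * n := Nat.mul_le_mul_right n (by omega)
    have h2 : (i + 1) * n = i * n + n := by ring
    omega
  have hb1 : bIdx n i (j+1) = i * n + j + 1 := by unfold bIdx; rw [if_pos he]; omega
  have hb0 : bIdx n i j = i * n + j := by unfold bIdx; rw [if_pos he]
  have hstep : stepVal m n μ (i * n + j) = vertVal m n μ i j := by
    unfold stepVal
    rw [dif_pos ⟨hn, hk⟩, dif_neg (by rw [hmod1]; omega : ¬ (i * n + j + 1) % n = 0),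
      if_pos (by rw [hdiv]; exact he), mu_vert μ, hdiv, hmod]
  unfold cellColor
  rw [hb1, hb0, pathColor_succ, hstep]

lemma S2 {m n : ℕ} (μ : Crease m n → ℤ) (hn : 2 ≤ n) {i j : ℕ}
    (ho : ¬ i % 2 = 0) (hi : i < m) (hj : j + 1 < n) :
    cellColor m n μ i j = cellColor m n μ i (j+1) + ((vertVal m n μ i j : ℤ) : ZMod 3) := by
  have hn0 : 0 < n := by omega
  have hdiv : (i * n + (n - 2 - j)) / n = i := by
    rw [Nat.mul_comm, Nat.mul_add_div hn0, Nat.div_eq_of_lt (by omega)]; omega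
  have hmod : (i * n + (n - 2 - j)) % n = n - 2 - j := by
    rw [Nat.mul_comm, Nat.mul_add_mod, Nat.mod_eq_of_lt (by omega)]
  have hmod1 : (i * n + (n - 2 - j) + 1) % n = n - 1 - j := by
    have h : i * n + (n - 2 - j) + 1 = n * i + (n - 1 - j) := by
      rw [Nat.mul_comm]; omega
    rw [h, Nat.mul_add_mod, Nat.mod_eq_of_lt (by omega)]
  have hk : i * n + (n - 2 - j) + 1 < m * n := by
    have h1 : (i + 1) * n ≤ m * n := Nat.mul_le_mul_right n (by omega)
    have h2 : (i + 1) * n = i * n + n := by ring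
    omega
  have hb1 : bIdx n i j = i * n + (n - 2 - j) + 1 := by unfold bIdx; rw [if_neg ho]; omega
  have hb0 : bIdx n i (j+1) = i * n + (n - 2 - j) := by unfold bIdx; rw [if_neg ho]; omega
  have hstep : stepVal m n μ (i * n + (n - 2 - j)) = vertVal m n μ i j := by
    unfold stepVal
    rw [dif_pos ⟨hn, hk⟩, dif_neg (by rw [hmod1]; omega : ¬ (i * n + (n - 2 - j) + 1) % n = 0),
      if_neg (by rw [hdiv]; exact ho), mu_vert μ, hdiv, hmod]
    congr 1
    omega
  unfold cellColor
  rw [hb1, hb0, pathColor_succ, hstep]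

lemma S3 {m n : ℕ} (μ : Crease m n → ℤ) (hn : 2 ≤ n) {i : ℕ}
    (he : i % 2 = 0) (hi : i + 1 < m) :
    cellColor m n μ (i+1) (n-1)
      = cellColor m n μ i (n-1) + ((horizVal m n μ i (n-1) : ℤ) : ZMod 3) := by
  have hn0 : 0 < n := by omega
  have hdiv : (i * n + (n - 1)) / n = i := by
    rw [Nat.mul_comm, Nat.mul_add_div hn0, Nat.div_eq_of_lt (by omega)]; omega
  have hmod : (i * n + (n - 1)) % n = n - 1 := by
    rw [Nat.mul_comm, Nat.mul_add_mod, Nat.mod_eq_of_lt (by omega)]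
  have hk1 : i * n + (n - 1) + 1 = (i + 1) * n := by
    have : (i + 1) * n = i * n + n := by ring
    omega
  have hmod0 : (i * n + (n - 1) + 1) % n = 0 := by
    rw [hk1]; exact Nat.mul_mod_left (i+1) n
  have hk : i * n + (n - 1) + 1 < m * n := by
    have h1 : (i + 2) * n ≤ m * n := Nat.mul_le_mul_right n (by omega)
    have h2 : (i + 2) * n = i * n + 2 * n := by ring
    omega
  have hbc : bCol n (i * n + (n - 1)) = n - 1 := by
    unfold bCol; rw [hdiv, if_pos he, hmod]
  have hb0 : bIdx n i (n-1) = i * n + (n - 1) := by unfold bIdx; rw [if_pos he]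
  have hb1 : bIdx n (i+1) (n-1) = i * n + (n - 1) + 1 := by
    unfold bIdx
    rw [if_neg (by omega : ¬ (i+1) % 2 = 0), hk1]
    have : (i + 1) * n = i * n + n := by ring
    omega
  have hstep : stepVal m n μ (i * n + (n - 1)) = horizVal m n μ i (n-1) := by
    unfold stepVal
    rw [dif_pos ⟨hn, hk⟩, dif_pos hmod0, mu_horiz μ, hdiv, hbc]
  unfold cellColor
  rw [hb1, hb0, pathColor_succ, hstep]

lemma S4 {m n : ℕ} (μ : Crease m n → ℤ) (hn : 2 ≤ n) {i : ℕ}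
    (ho : ¬ i % 2 = 0) (hi : i + 1 < m) :
    cellColor m n μ (i+1) 0
      = cellColor m n μ i 0 + ((horizVal m n μ i 0 : ℤ) : ZMod 3) := by
  have hn0 : 0 < n := by omega
  have hdiv : (i * n + (n - 1)) / n = i := by
    rw [Nat.mul_comm, Nat.mul_add_div hn0, Nat.div_eq_of_lt (by omega)]; omega
  have hmod : (i * n + (n - 1)) % n = n - 1 := by
    rw [Nat.mul_comm, Nat.mul_add_mod, Nat.mod_eq_of_lt (by omega)]
  have hk1 : i * n + (n - 1) + 1 = (i + 1) * n := by
    have : (i + 1) * n = i * n + n := by ring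
    omega
  have hmod0 : (i * n + (n - 1) + 1) % n = 0 := by
    rw [hk1]; exact Nat.mul_mod_left (i+1) n
  have hk : i * n + (n - 1) + 1 < m * n := by
    have h1 : (i + 2) * n ≤ m * n := Nat.mul_le_mul_right n (by omega)
    have h2 : (i + 2) * n = i * n + 2 * n := by ring
    omega
  have hbc : bCol n (i * n + (n - 1)) = 0 := by
    unfold bCol; rw [hdiv, if_neg ho, hmod]; omega
  have hb0 : bIdx n i 0 = i * n + (n - 1) := by unfold bIdx; rw [if_neg ho]; omega
  have hb1 : bIdx n (i+1) 0 = i * n + (n - 1) + 1 := by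
    unfold bIdx
    rw [if_pos (by omega : (i+1) % 2 = 0), hk1]; omega
  have hstep : stepVal m n μ (i * n + (n - 1)) = horizVal m n μ i 0 := by
    unfold stepVal
    rw [dif_pos ⟨hn, hk⟩, dif_pos hmod0, mu_horiz μ, hdiv, hbc]
  unfold cellColor
  rw [hb1, hb0, pathColor_succ, hstep]

lemma down_even {m n : ℕ} {μ : Crease m n → ℤ} (hn : 2 ≤ n) (hμ : FlatFoldable μ) :
    ∀ d i j, i % 2 = 0 → i + 1 < m → j < n → j + d = n - 1 →
      cellColor m n μ (i+1) j
        = cellColor m n μ i j + ((horizVal m n μ i j : ℤ) : ZMod 3) := by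
  intro d
  induction d with
  | zero =>
    intro i j he hi hj hd
    have hjn : j = n - 1 := by omega
    subst hjn
    exact S3 μ hn he hi
  | succ d ih =>
    intro i j he hi hj hd
    have hj1 : j + 1 < n := by omega
    have hIH := ih i (j+1) he hi (by omega) (by omega)
    have hFF := (hμ.2 i j hi hj1).2
    rw [if_pos he] at hFF
    simp only [mu_vert μ, mu_horiz μ] at hFF
    have hkey : horizVal m n μ i j
        = vertVal m n μ i j + vertVal m n μ (i+1) j + horizVal m n μ i (j+1) := by
      linarith
    rw [S2 μ hn (by omega : ¬ (i+1) % 2 = 0) (by omega) hj1, hIH,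
      S1 μ hn he (by omega) hj1, hkey]
    push_cast
    ring

lemma down_odd {m n : ℕ} {μ : Crease m n → ℤ} (hn : 2 ≤ n) (hμ : FlatFoldable μ) :
    ∀ j i, ¬ i % 2 = 0 → i + 1 < m → j < n →
      cellColor m n μ (i+1) j
        = cellColor m n μ i j + ((horizVal m n μ i j : ℤ) : ZMod 3) := by
  intro j
  induction j with
  | zero =>
    intro i ho hi _
    exact S4 μ hn ho hi
  | succ j ih =>
    intro i ho hi hj
    have hj1 : j + 1 < n := hj
    have hIH := ih i ho hi (by omega)
    have hFF := (hμ.2 i j hi hj1).2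
    rw [if_neg ho] at hFF
    simp only [mu_vert μ, mu_horiz μ] at hFF
    have hkey : horizVal m n μ i (j+1)
        = vertVal m n μ i j + vertVal m n μ (i+1) j + horizVal m n μ i j := by
      linarith
    have hS2 := S2 μ hn ho (by omega) hj1
    rw [S1 μ hn (by omega : (i+1) % 2 = 0) (by omega) hj1, hIH, hS2, hkey]
    push_cast
    ring

lemma down {m n : ℕ} {μ : Crease m n → ℤ} (hn : 2 ≤ n) (hμ : FlatFoldable μ)
    {i j : ℕ} (hi : i + 1 < m) (hj : j < n) :
    cellColor m n μ (i+1) j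
      = cellColor m n μ i j + ((horizVal m n μ i j : ℤ) : ZMod 3) := by
  by_cases he : i % 2 = 0
  · exact down_even hn hμ (n - 1 - j) i j he hi hj (by omega)
  · exact down_odd hn hμ j i he hi hj

lemma ne_of_add_pm {a b : ZMod 3} {z : ℤ} (hz : z = 1 ∨ z = -1)
    (h : a = b + (z : ZMod 3)) : a ≠ b := by
  rcases hz with rfl | rfl <;> subst h <;> intro hc <;>
    [(have h0 : ((1 : ℤ) : ZMod 3) = 0 := by
        have := left_eq_add.mp hc.symm; exact this);
     (have h0 : ((-1 : ℤ) : ZMod 3) = 0 := by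
        have := left_eq_add.mp hc.symm; exact this)] <;>
    revert h0 <;> decide

/-- if `μ` is a locally flat-foldable MV-assignment of the `m × n`
Miura-ori (`m, n ≥ 2`), then the function `c` on cells defined by `c(v_1) = 0` and
`c(v_k) = c(v_{k-1}) + μ(c_k) (mod 3)` along the boustrophedon order is a proper
3-coloring of the grid graph `G(m,n)` with `c(0,0) = 0`. -/
theorem cellColor_isProperColoring {m n : ℕ} (hm : 2 ≤ m) (hn : 2 ≤ n)
    (μ : Crease m n → ℤ) (hμ : FlatFoldable μ) :
    cellColor m n μ 0 0 = 0 ∧ ProperColoringN m n (cellColor m n μ) := by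
  constructor
  · simp [cellColor, bIdx, pathColor]
  · intro i j i' j' hi hj hi' hj' hdist
    have hcases : (i' = i + 1 ∧ j' = j) ∨ (i = i' + 1 ∧ j' = j)
        ∨ (i' = i ∧ j' = j + 1) ∨ (i' = i ∧ j = j' + 1) := by omega
    rcases hcases with ⟨h1, h2⟩ | ⟨h1, h2⟩ | ⟨h1, h2⟩ | ⟨h1, h2⟩
    · rw [h1, h2]; rw [h1] at hi'
      exact (ne_of_add_pm (horizVal_pm hμ.1 hi' hj) (down hn hμ hi' hj)).symm
    · rw [h1, h2]; rw [h1] at hi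
      exact ne_of_add_pm (horizVal_pm hμ.1 hi hj) (down hn hμ hi hj)
    · rw [h1, h2]; rw [h2] at hj'
      by_cases he : i % 2 = 0
      · exact (ne_of_add_pm (vertVal_pm hμ.1 hi hj') (S1 μ hn he hi hj')).symm
      · exact ne_of_add_pm (vertVal_pm hμ.1 hi hj') (S2 μ hn he hi hj')
    · rw [h1, h2]; rw [h2] at hj
      by_cases he : i % 2 = 0
      · exact ne_of_add_pm (vertVal_pm hμ.1 hi hj) (S1 μ hn he hi hj)
      · exact (ne_of_add_pm (vertVal_pm hμ.1 hi hj) (S2 μ hn he hi hj)).symm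

end Miura
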